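/- arXiv:2503.15347 — 2 statements merged into one kernel-verified Lean document; each statement's English description precedes it below -/
import Mathlib

section
/- Let X_n ∼ χ²_{α_n+α_0} and Y_n ∼ χ²_{β_n+β_0} be independent, where α_0,β_0∈ℝ and α_n,β_n>0 satisfy α_n→∞, β_n→∞ and α_n/β_n→∞. Then for every t=(t_1,t_2,t_3,t_4)∈ℝ³×(−∞,1), the scaled cumulant generating functions converge: (2/β_n)·log E[exp((β_n/2)(t_1(X_n−α_n)/√(α_nβ_n) + t_2 X_n/α_n + t_3 Y_n/√(α_nβ_n) + t_4 Y_n/β_n))] → (1/2)t_1² + t_2 − log(1−t_4) as n→∞ (the expectation being finite for all n large enough). -/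
open MeasureTheory ProbabilityTheory Filter Topology Polynomial
open scoped ENNReal NNReal

noncomputable section

/-- The chi-squared distribution with `r` degrees of freedom, as a measure on `ℝ`
(supported on `(0,∞)`). -/
def chiSq (r : ℝ) : Measure ℝ :=
  volume.withDensity (fun x => ENNReal.ofReal
    (if 0 < x then x ^ (r / 2 - 1) * Real.exp (-x / 2) / ((2 : ℝ) ^ (r / 2) * Real.Gamma (r / 2))
     else 0))

/-!
Since `χ²_r` is the Gamma law of shape `r/2` and rate `1/2`, its moment generating function is
`(1 - 2s)^(-r/2)` for `s < 1/2`. The exponent is affine in `(Xₙ, Yₙ)`, so by independence the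
expectation factorises, and with `u = √(βₙ/αₙ) → 0` the scaled cumulant generating function is
exactly
`-t₁/u - u⁻² log(1 - t₁u - t₂u²) - (α₀/βₙ) log(1 - t₁u - t₂u²) - (1 + β₀/βₙ) log(1 - t₃u - t₄)`.
The expansion `log(1 - x) = -x - x²/2 + O(x³)` sends the first two terms to `t₁²/2 + t₂`, and the
remaining ones tend to `0` and `-log(1 - t₄)`.
-/

open Real Set

lemma chiSq_eq_gammaMeasure (r : ℝ) : chiSq r = gammaMeasure (r / 2) (1 / 2) := by
  refine withDensity_congr_ae ?_
  filter_upwards [compl_mem_ae_iff.mpr (measure_singleton (0 : ℝ))] with x (hx : x ≠ 0)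
  rw [gammaPDF_eq]
  rcases hx.lt_or_gt with h | h
  · rw [if_neg h.not_gt, if_neg h.not_ge]
  · rw [if_pos h, if_pos h.le, div_rpow zero_le_one (by norm_num), one_rpow]
    congr 1
    rw [show -x / 2 = -(1 / 2 * x) by ring]
    field_simp

lemma isProbabilityMeasure_chiSq {r : ℝ} (hr : 0 < r) : IsProbabilityMeasure (chiSq r) := by
  rw [chiSq_eq_gammaMeasure]
  exact isProbabilityMeasure_gammaMeasure (by linarith) one_half_pos

namespace ProbabilityTheory

section GammaMGF

variable {a c : ℝ}

lemma gammaPDFReal_mul_exp_mul (a c s : ℝ) :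
    (fun x => gammaPDFReal a c x * exp (s * x)) =
      (Ici 0).indicator fun x => c ^ a / Gamma a * (x ^ (a - 1) * exp (-((c - s) * x))) := by
  ext x
  by_cases hx : 0 ≤ x
  · rw [indicator_of_mem (mem_Ici.mpr hx), gammaPDFReal, if_pos hx, mul_assoc, mul_assoc,
      ← exp_add]
    ring_nf
  · rw [indicator_of_notMem (fun h => hx (mem_Ici.mp h)), gammaPDFReal, if_neg hx, zero_mul]

lemma integrable_gammaPDFReal_mul_exp_mul {s : ℝ} (ha : 0 < a) (hs : s < c) :
    Integrable fun x => gammaPDFReal a c x * exp (s * x) := by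
  rw [gammaPDFReal_mul_exp_mul, integrable_indicator_iff measurableSet_Ici,
    integrableOn_Ici_iff_integrableOn_Ioi]
  have h := integrableOn_rpow_mul_exp_neg_mul_rpow (s := a - 1) (p := 1) (by linarith)
    zero_lt_one (sub_pos.mpr hs)
  simp only [rpow_one, neg_mul] at h
  exact h.const_mul _

lemma integral_gammaPDFReal_mul_exp_mul {s : ℝ} (ha : 0 < a) (hc : 0 < c) (hs : s < c) :
    ∫ x, gammaPDFReal a c x * exp (s * x) = (c / (c - s)) ^ a := by
  have hcs : 0 < c - s := sub_pos.mpr hs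
  rw [gammaPDFReal_mul_exp_mul, integral_indicator measurableSet_Ici,
    integral_Ici_eq_integral_Ioi, integral_const_mul, integral_rpow_mul_exp_neg_mul_Ioi ha hcs,
    div_rpow zero_le_one hcs.le, one_rpow, div_rpow hc.le hcs.le]
  field_simp

lemma measurable_gammaPDF (a c : ℝ) : Measurable (gammaPDF a c) :=
  (measurable_gammaPDFReal a c).ennreal_ofReal

lemma toReal_gammaPDF (ha : 0 < a) (hc : 0 < c) (x : ℝ) :
    (gammaPDF a c x).toReal = gammaPDFReal a c x :=
  ENNReal.toReal_ofReal (gammaPDFReal_nonneg ha hc x)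

lemma integrable_gammaMeasure_iff (ha : 0 < a) (hc : 0 < c) {g : ℝ → ℝ} :
    Integrable g (gammaMeasure a c) ↔ Integrable fun x => gammaPDFReal a c x * g x := by
  rw [gammaMeasure, integrable_withDensity_iff_integrable_smul'
    (measurable_gammaPDF a c) (ae_of_all _ fun _ => ENNReal.ofReal_lt_top)]
  simp only [toReal_gammaPDF ha hc, smul_eq_mul]

lemma integral_gammaMeasure (ha : 0 < a) (hc : 0 < c) (g : ℝ → ℝ) :
    ∫ x, g x ∂gammaMeasure a c = ∫ x, gammaPDFReal a c x * g x := by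
  rw [gammaMeasure, integral_withDensity_eq_integral_toReal_smul
    (measurable_gammaPDF a c) (ae_of_all _ fun _ => ENNReal.ofReal_lt_top)]
  simp only [toReal_gammaPDF ha hc, smul_eq_mul]

lemma integrable_exp_mul_gammaMeasure {s : ℝ} (ha : 0 < a) (hc : 0 < c) (hs : s < c) :
    Integrable (fun x => exp (s * x)) (gammaMeasure a c) :=
  (integrable_gammaMeasure_iff ha hc).mpr (integrable_gammaPDFReal_mul_exp_mul ha hs)

lemma mgf_id_gammaMeasure {s : ℝ} (ha : 0 < a) (hc : 0 < c) (hs : s < c) :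
    mgf id (gammaMeasure a c) s = (c / (c - s)) ^ a := by
  rw [mgf, ← integral_gammaPDFReal_mul_exp_mul ha hc hs, ← integral_gammaMeasure ha hc]
  rfl

end GammaMGF

section Independent

variable {Ω : Type*} [MeasurableSpace Ω] {P : Measure Ω} {X Y : Ω → ℝ}

lemma IndepFun.integrable_exp_mul_add_mul (hXY : IndepFun X Y P) {s s' : ℝ}
    (hX : Integrable (fun ω => exp (s * X ω)) P) (hY : Integrable (fun ω => exp (s' * Y ω)) P) :
    Integrable (fun ω => exp (s * X ω + s' * Y ω)) P := by
  simpa only [exp_add, Pi.mul_def] using (hXY.exp_mul s s').integrable_mul hX hY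

lemma IndepFun.integral_exp_mul_add_mul (hXY : IndepFun X Y P) {s s' : ℝ}
    (hX : AEStronglyMeasurable (fun ω => exp (s * X ω)) P)
    (hY : AEStronglyMeasurable (fun ω => exp (s' * Y ω)) P) :
    ∫ ω, exp (s * X ω + s' * Y ω) ∂P = mgf X P s * mgf Y P s' := by
  simpa only [mgf, exp_add, Pi.mul_apply] using
    (hXY.exp_mul s s').integral_mul_eq_mul_integral hX hY

end Independent

end ProbabilityTheory

section ChiSqMGF

variable {r s : ℝ}

lemma integrable_exp_mul_chiSq (hr : 0 < r) (hs : s < 1 / 2) :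
    Integrable (fun x => exp (s * x)) (chiSq r) := by
  rw [chiSq_eq_gammaMeasure]
  exact integrable_exp_mul_gammaMeasure (by linarith) one_half_pos hs

lemma mgf_id_chiSq (hr : 0 < r) (hs : s < 1 / 2) :
    mgf id (chiSq r) s = (1 - 2 * s) ^ (-(r / 2)) := by
  rw [chiSq_eq_gammaMeasure, mgf_id_gammaMeasure (by linarith) one_half_pos hs,
    show (1 / 2 : ℝ) / (1 / 2 - s) = (1 - 2 * s)⁻¹ by field_simp,
    inv_rpow (by linarith), rpow_neg (by linarith)]

variable {Ω : Type*} [MeasurableSpace Ω] {P : Measure Ω} {X Y : Ω → ℝ}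

lemma aemeasurable_of_map_eq_chiSq (hr : 0 < r) (hX : P.map X = chiSq r) : AEMeasurable X P :=
  have := isProbabilityMeasure_chiSq hr
  .of_map_ne_zero (hX ▸ IsProbabilityMeasure.ne_zero _)

lemma integrable_exp_mul_of_map_eq_chiSq (hr : 0 < r) (hs : s < 1 / 2)
    (hX : P.map X = chiSq r) : Integrable (fun ω => exp (s * X ω)) P := by
  have h := integrable_exp_mul_chiSq hr hs
  rw [← hX] at h
  exact (integrable_map_measure (by fun_prop) (aemeasurable_of_map_eq_chiSq hr hX)).mp h

lemma mgf_of_map_eq_chiSq (hr : 0 < r) (hs : s < 1 / 2) (hX : P.map X = chiSq r) :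
    mgf X P s = (1 - 2 * s) ^ (-(r / 2)) := by
  rw [← mgf_id_map (aemeasurable_of_map_eq_chiSq hr hX), hX, mgf_id_chiSq hr hs]

lemma integral_exp_mul_add_mul_of_chiSq {q s' : ℝ} (hr : 0 < r) (hq : 0 < q)
    (hs : s < 1 / 2) (hs' : s' < 1 / 2) (hX : P.map X = chiSq r) (hY : P.map Y = chiSq q)
    (hXY : IndepFun X Y P) :
    Integrable (fun ω => exp (s * X ω + s' * Y ω)) P ∧
      ∫ ω, exp (s * X ω + s' * Y ω) ∂P = (1 - 2 * s) ^ (-(r / 2)) * (1 - 2 * s') ^ (-(q / 2)) := by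
  have hiX := integrable_exp_mul_of_map_eq_chiSq hr hs hX
  have hiY := integrable_exp_mul_of_map_eq_chiSq hq hs' hY
  refine ⟨hXY.integrable_exp_mul_add_mul hiX hiY, ?_⟩
  rw [hXY.integral_exp_mul_add_mul hiX.1 hiY.1, mgf_of_map_eq_chiSq hr hs hX,
    mgf_of_map_eq_chiSq hq hs' hY]

lemma scaled_exponent_eq {a b u : ℝ} (ha : 0 < a) (hu : 0 < u) (hb : b = a * u ^ 2)
    (t1 t2 t3 t4 x y : ℝ) :
    b / 2 * (t1 * ((x - a) / √(a * b)) + t2 * (x / a) + t3 * (y / √(a * b)) + t4 * (y / b)) =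
      (t1 * u + t2 * u ^ 2) / 2 * x + (t3 * u + t4) / 2 * y + -(b * t1 / (2 * u)) := by
  have hab : √(a * b) = a * u := by
    rw [hb, show a * (a * u ^ 2) = (a * u) ^ 2 by ring, sqrt_sq (by positivity)]
  rw [hab, hb]
  field_simp
  ring

lemma scaled_log_integral_eq {α0 β0 a b u t1 t2 t3 t4 : ℝ} (ha : 0 < a) (hu : 0 < u) (hb : b = a * u ^ 2)
    (hda : 0 < a + α0) (hdb : 0 < b + β0)
    (hX : P.map X = chiSq (a + α0)) (hY : P.map Y = chiSq (b + β0)) (hXY : IndepFun X Y P)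
    (h1 : t1 * u + t2 * u ^ 2 < 1) (h2 : t3 * u + t4 < 1) :
    Integrable (fun ω => exp (b / 2 * (t1 * ((X ω - a) / √(a * b)) + t2 * (X ω / a) +
        t3 * (Y ω / √(a * b)) + t4 * (Y ω / b)))) P ∧
    2 / b * log (∫ ω, exp (b / 2 * (t1 * ((X ω - a) / √(a * b)) + t2 * (X ω / a) +
        t3 * (Y ω / √(a * b)) + t4 * (Y ω / b))) ∂P) =
      -t1 / u - 1 / u ^ 2 * log (1 - (t1 * u + t2 * u ^ 2))
        - α0 / b * log (1 - (t1 * u + t2 * u ^ 2)) - (1 + β0 / b) * log (1 - (t3 * u + t4)) := by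
  simp only [scaled_exponent_eq ha hu hb, exp_add _ (-(b * t1 / (2 * u)))]
  obtain ⟨hint, heq⟩ := integral_exp_mul_add_mul_of_chiSq (s := (t1 * u + t2 * u ^ 2) / 2)
    (s' := (t3 * u + t4) / 2) hda hdb (by linarith) (by linarith) hX hY hXY
  refine ⟨hint.mul_const _, ?_⟩
  have hpos1 : 0 < 1 - (t1 * u + t2 * u ^ 2) := by linarith
  have hpos2 : 0 < 1 - (t3 * u + t4) := by linarith
  have hb0 : 0 < b := hb ▸ by positivity
  rw [integral_mul_const, heq, mul_div_cancel₀ _ two_ne_zero, mul_div_cancel₀ _ two_ne_zero,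
    log_mul (by positivity) (exp_pos _).ne', log_mul (by positivity) (by positivity), log_exp,
    log_rpow hpos1, log_rpow hpos2]
  have hab : a = b / u ^ 2 := by rw [hb]; field_simp
  rw [hab]
  field_simp
  ring

end ChiSqMGF

lemma abs_log_one_sub_add_le {x : ℝ} (hx : |x| ≤ 1 / 2) :
    |log (1 - x) + x + x ^ 2 / 2| ≤ 2 * |x| ^ 3 := by
  have h := abs_log_sub_add_sum_range_le (hx.trans_lt (by norm_num)) 2
  norm_num [Finset.sum_range_succ] at h
  calc |log (1 - x) + x + x ^ 2 / 2| = |x + x ^ 2 / 2 + log (1 - x)| := by ring_nf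
    _ ≤ |x| ^ 3 / (1 - |x|) := h
    _ ≤ |x| ^ 3 / (1 / 2) := by gcongr; linarith
    _ = 2 * |x| ^ 3 := by ring

lemma tendsto_log_one_sub_quadratic (t1 t2 : ℝ) :
    Tendsto (fun u => -t1 / u - 1 / u ^ 2 * log (1 - (t1 * u + t2 * u ^ 2))) (𝓝[≠] 0)
      (𝓝 (1 / 2 * t1 ^ 2 + t2)) := by
  set x : ℝ → ℝ := fun u => t1 * u + t2 * u ^ 2
  set R : ℝ → ℝ := fun y => log (1 - y) + y + y ^ 2 / 2
  have hx : Tendsto x (𝓝 0) (𝓝 0) :=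
    (show Continuous x by fun_prop).tendsto' 0 0 (by simp [x])
  have hbound : Tendsto (fun u => 2 * |t1 + t2 * u| ^ 3 * |u|) (𝓝 0) (𝓝 0) :=
    (show Continuous fun u : ℝ => 2 * |t1 + t2 * u| ^ 3 * |u| by fun_prop).tendsto' 0 0 (by simp)
  have hR : Tendsto (fun u => R (x u) / u ^ 2) (𝓝 0) (𝓝 0) := by
    refine squeeze_zero_norm' ?_ hbound
    filter_upwards [hx.eventually (eventually_abs_sub_lt 0 one_half_pos)] with u hu
    rw [sub_zero] at hu
    rcases eq_or_ne u 0 with rfl | hu0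
    · simp
    rw [norm_div, norm_pow, Real.norm_eq_abs, Real.norm_eq_abs, div_le_iff₀ (by positivity)]
    calc |R (x u)| ≤ 2 * |x u| ^ 3 := abs_log_one_sub_add_le hu.le
      _ = 2 * |t1 + t2 * u| ^ 3 * |u| * |u| ^ 2 := by
        rw [show x u = (t1 + t2 * u) * u by ring, abs_mul]
        ring
  have hmain : Tendsto (fun u => t2 + (t1 + t2 * u) ^ 2 / 2) (𝓝 0) (𝓝 (1 / 2 * t1 ^ 2 + t2)) :=
    (show Continuous fun u : ℝ => t2 + (t1 + t2 * u) ^ 2 / 2 by fun_prop).tendsto' 0 _ (by ring)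
  -- For `u ≠ 0`: `-t₁/u - u⁻² log(1 - x u) = t₂ + (t₁ + t₂u)²/2 - R(x u)/u²`.
  refine (sub_zero (1 / 2 * t1 ^ 2 + t2) ▸ (hmain.sub hR).mono_left nhdsWithin_le_nhds).congr' ?_
  filter_upwards [self_mem_nhdsWithin] with u (hu : u ≠ 0)
  simp only [x, R]
  field_simp
  ring

lemma tendsto_scaled_cgf {ι : Type*} {l : Filter ι} {u b : ι → ℝ} (hu : Tendsto u l (𝓝[≠] 0))
    (hb : Tendsto b l atTop) (α0 β0 t1 t2 t3 t4 : ℝ) (ht4 : t4 < 1) :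
    Tendsto (fun i => -t1 / u i - 1 / u i ^ 2 * log (1 - (t1 * u i + t2 * u i ^ 2))
        - α0 / b i * log (1 - (t1 * u i + t2 * u i ^ 2))
        - (1 + β0 / b i) * log (1 - (t3 * u i + t4)))
      l (𝓝 (1 / 2 * t1 ^ 2 + t2 - log (1 - t4))) := by
  have hu0 := tendsto_nhds_of_tendsto_nhdsWithin hu
  have hL1 : Tendsto (fun i => log (1 - (t1 * u i + t2 * u i ^ 2))) l (𝓝 0) := by
    have h : ContinuousAt (fun v : ℝ => log (1 - (t1 * v + t2 * v ^ 2))) 0 :=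
      (continuousAt_log (by simp)).comp (by fun_prop)
    simpa [Function.comp_def] using h.tendsto.comp hu0
  have hL2 : Tendsto (fun i => log (1 - (t3 * u i + t4))) l (𝓝 (log (1 - t4))) := by
    have h : ContinuousAt (fun v : ℝ => log (1 - (t3 * v + t4))) 0 :=
      (continuousAt_log (by simp; linarith)).comp (by fun_prop)
    simpa [Function.comp_def] using h.tendsto.comp hu0
  have hα0 : Tendsto (fun i => α0 / b i) l (𝓝 0) := hb.const_div_atTop α0
  have hβ0 : Tendsto (fun i => 1 + β0 / b i) l (𝓝 1) := by
    simpa using (hb.const_div_atTop β0).const_add 1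
  simpa using (((tendsto_log_one_sub_quadratic t1 t2).comp hu).sub (hα0.mul hL1)).sub (hβ0.mul hL2)

theorem chiSq_cgf_limit_general
    (α0 β0 : ℝ) (αs βs : ℕ → ℝ)
    (hα : Tendsto αs atTop atTop) (hβ : Tendsto βs atTop atTop)
    (hratio : Tendsto (fun n => αs n / βs n) atTop atTop)
    (Ω : ℕ → Type) [∀ n, MeasurableSpace (Ω n)]
    (P : ∀ n, Measure (Ω n))
    (X Y : ∀ n, Ω n → ℝ)
    (hX : ∀ n, Measure.map (X n) (P n) = chiSq (αs n + α0))
    (hY : ∀ n, Measure.map (Y n) (P n) = chiSq (βs n + β0))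
    (hindep : ∀ n, IndepFun (X n) (Y n) (P n))
    (t1 t2 t3 t4 : ℝ) (ht4 : t4 < 1) :
    (∀ᶠ n in atTop, Integrable (fun ω => Real.exp ((βs n / 2) *
        (t1 * ((X n ω - αs n) / Real.sqrt (αs n * βs n)) + t2 * (X n ω / αs n) +
          t3 * (Y n ω / Real.sqrt (αs n * βs n)) + t4 * (Y n ω / βs n)))) (P n)) ∧
    Tendsto (fun n => (2 / βs n) * Real.log (∫ ω, Real.exp ((βs n / 2) *
        (t1 * ((X n ω - αs n) / Real.sqrt (αs n * βs n)) + t2 * (X n ω / αs n) +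
          t3 * (Y n ω / Real.sqrt (αs n * βs n)) + t4 * (Y n ω / βs n))) ∂(P n)))
      atTop (𝓝 ((1 / 2) * t1 ^ 2 + t2 - Real.log (1 - t4))) := by
  set u : ℕ → ℝ := fun n => √(βs n / αs n)
  have hαpos := hα.eventually_gt_atTop 0
  have hβpos := hβ.eventually_gt_atTop 0
  have hu0 : Tendsto u atTop (𝓝 0) := by
    simpa [u, inv_div] using hratio.inv_tendsto_atTop.sqrt
  have hu : Tendsto u atTop (𝓝[≠] 0) := tendsto_nhdsWithin_iff.mpr ⟨hu0, by
    filter_upwards [hαpos, hβpos] with n ha hb using (sqrt_pos.mpr (div_pos hb ha)).ne'⟩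
  have hgood : ∀ᶠ n in atTop, 0 < αs n ∧ 0 < u n ∧ βs n = αs n * u n ^ 2 ∧
      0 < αs n + α0 ∧ 0 < βs n + β0 ∧ t1 * u n + t2 * u n ^ 2 < 1 ∧ t3 * u n + t4 < 1 := by
    filter_upwards [hαpos, hβpos, (tendsto_atTop_add_const_right _ α0 hα).eventually_gt_atTop 0,
      (tendsto_atTop_add_const_right _ β0 hβ).eventually_gt_atTop 0,
      (((show Continuous fun v : ℝ => t1 * v + t2 * v ^ 2 by fun_prop).tendsto' 0 0 (by simp)).comp
        hu0).eventually_lt_const one_pos,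
      (((show Continuous fun v : ℝ => t3 * v + t4 by fun_prop).tendsto' 0 t4 (by simp)).comp
        hu0).eventually_lt_const ht4] with n ha hb hda hdb h1 h2
    refine ⟨ha, sqrt_pos.mpr (div_pos hb ha), ?_, hda, hdb, h1, h2⟩
    rw [sq_sqrt (div_pos hb ha).le]
    field_simp
  refine ⟨?_, (tendsto_scaled_cgf hu hβ α0 β0 t1 t2 t3 t4 ht4).congr' ?_⟩
  · filter_upwards [hgood] with n ⟨ha, hun, hb, hda, hdb, h1, h2⟩
    exact (scaled_log_integral_eq ha hun hb hda hdb (hX n) (hY n) (hindep n) h1 h2).1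
  · filter_upwards [hgood] with n ⟨ha, hun, hb, hda, hdb, h1, h2⟩
    exact (scaled_log_integral_eq ha hun hb hda hdb (hX n) (hY n) (hindep n) h1 h2).2.symm

/-- **Convergence of scaled cumulant generating functions (proof of Lemma 4.1).**
For independent `X_n ∼ χ²_{α_n+α₀}`, `Y_n ∼ χ²_{β_n+β₀}` with `α_n, β_n → ∞`, `α_n/β_n → ∞`,
and `t ∈ ℝ³ × (-∞,1)`, the expectations are eventually finite and
`(2/β_n) log E[exp((β_n/2)⟨t, G⁽ⁿ⁾⟩)] → t₁²/2 + t₂ - log(1 - t₄)`. -/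
theorem chiSq_cgf_limit
    (α0 β0 : ℝ) (αs βs : ℕ → ℝ)
    (hαpos : ∀ n, 0 < αs n) (hβpos : ∀ n, 0 < βs n)
    (hdfα : ∀ n, 0 < αs n + α0) (hdfβ : ∀ n, 0 < βs n + β0)
    (hα : Tendsto αs atTop atTop) (hβ : Tendsto βs atTop atTop)
    (hratio : Tendsto (fun n => αs n / βs n) atTop atTop)
    (Ω : ℕ → Type) [∀ n, MeasurableSpace (Ω n)]
    (P : ∀ n, Measure (Ω n)) (hP : ∀ n, IsProbabilityMeasure (P n))
    (X Y : ∀ n, Ω n → ℝ)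
    (hX : ∀ n, Measure.map (X n) (P n) = chiSq (αs n + α0))
    (hY : ∀ n, Measure.map (Y n) (P n) = chiSq (βs n + β0))
    (hindep : ∀ n, IndepFun (X n) (Y n) (P n))
    (t1 t2 t3 t4 : ℝ) (ht4 : t4 < 1) :
    (∀ᶠ n in atTop, Integrable (fun ω => Real.exp ((βs n / 2) *
        (t1 * ((X n ω - αs n) / Real.sqrt (αs n * βs n)) + t2 * (X n ω / αs n) +
          t3 * (Y n ω / Real.sqrt (αs n * βs n)) + t4 * (Y n ω / βs n)))) (P n)) ∧
    Tendsto (fun n => (2 / βs n) * Real.log (∫ ω, Real.exp ((βs n / 2) *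
        (t1 * ((X n ω - αs n) / Real.sqrt (αs n * βs n)) + t2 * (X n ω / αs n) +
          t3 * (Y n ω / Real.sqrt (αs n * βs n)) + t4 * (Y n ω / βs n))) ∂(P n)))
      atTop (𝓝 ((1 / 2) * t1 ^ 2 + t2 - Real.log (1 - t4))) :=
  chiSq_cgf_limit_general α0 β0 αs βs hα hβ hratio Ω P X Y hX hY hindep t1 t2 t3 t4 ht4

end
end

section
/- For every ξ≥0 and every integer k≥1, the k-th moment of the signed measure ν_ξ with Lebesgue density (ξ/2π)·x(x²−3)/√(4−x²) on [−2,2] satisfies ∫_{−2}^{2} x^k · (ξ/2π)·x(x²−3)/√(4−x²) dx = ξ·C(k,(k−3)/2) if k is odd and k≥3, and = 0 if k is even or k=1, where C(·,·) is the binomial coefficient. Moreover ν_ξ has total mass zero. -/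
open MeasureTheory ProbabilityTheory Filter Topology Polynomial
open scoped ENNReal NNReal

noncomputable section

/-!
Expanding the density, the `k`-th moment of `ν_ξ` is `(ξ / 2π) (J (k + 3) - 3 J (k + 1))` with
`J n = ∫_{-2}^{2} xⁿ / √(4 - x²) dx`. Odd `J n` vanish by symmetry; `J 0 = π` since
`arcsin (x / 2)` is a primitive of `1 / √(4 - x²)`, and differentiating `xⁿ⁺¹ √(4 - x²)` gives
`(n + 2) J (n + 2) = 4 (n + 1) J n`, so `J (2m) = π C(2m, m)`. What remains is the Pascal identity
`C(2j + 6, j + 3) = 3 C(2j + 4, j + 2) + 2 C(2j + 3, j)`.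
-/

open Real Set intervalIntegral

theorem hasDerivAt_arcsin_div_two {x : ℝ} (hx : x ∈ Ioo (-2 : ℝ) 2) :
    HasDerivAt (fun y => arcsin (y / 2)) (√(4 - x ^ 2))⁻¹ x := by
  obtain ⟨hx₁, hx₂⟩ := hx
  refine ((hasDerivAt_arcsin (x := x / 2) (by intro h; linarith) (by intro h; linarith)).comp
    x ((hasDerivAt_id x).div_const 2)).congr_deriv ?_
  rw [show 1 - (x / 2) ^ 2 = (4 - x ^ 2) / 2 ^ 2 by ring, sqrt_div' _ (by norm_num),
    sqrt_sq (by norm_num)]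
  simp only [one_div]
  ring

theorem intervalIntegrable_inv_sqrt_four_sub_sq :
    IntervalIntegrable (fun x : ℝ => (√(4 - x ^ 2))⁻¹) volume (-2) 2 :=
  (intervalIntegrable_iff_integrableOn_Ioc_of_le (by norm_num)).2 <|
    integrableOn_deriv_of_nonneg (by fun_prop) (fun _ hx => hasDerivAt_arcsin_div_two hx)
      (fun _ _ => by positivity)

theorem intervalIntegrable_pow_div_sqrt_four_sub_sq (n : ℕ) :
    IntervalIntegrable (fun x : ℝ => x ^ n / √(4 - x ^ 2)) volume (-2) 2 := by
  simpa only [div_eq_mul_inv] using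
    intervalIntegrable_inv_sqrt_four_sub_sq.continuousOn_mul (continuous_pow n).continuousOn

/-- Unnormalized: the arcsine law on `[-2, 2]` has density `1 / (π √(4 - x²))`. -/
def arcsineMoment (n : ℕ) : ℝ := ∫ x in (-2 : ℝ)..2, x ^ n / √(4 - x ^ 2)

theorem arcsineMoment_zero : arcsineMoment 0 = π := by
  rw [arcsineMoment]
  simp only [pow_zero, one_div]
  rw [integral_eq_sub_of_hasDerivAt_of_le (by norm_num) (by fun_prop)
    (fun _ hx => hasDerivAt_arcsin_div_two hx) intervalIntegrable_inv_sqrt_four_sub_sq]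
  norm_num

theorem hasDerivAt_pow_mul_sqrt_four_sub_sq (n : ℕ) {x : ℝ} (hx : x ∈ Ioo (-2 : ℝ) 2) :
    HasDerivAt (fun y => y ^ (n + 1) * √(4 - y ^ 2))
      (4 * (n + 1) * (x ^ n / √(4 - x ^ 2)) - (n + 2) * (x ^ (n + 2) / √(4 - x ^ 2))) x := by
  obtain ⟨hx₁, hx₂⟩ := hx
  have hpos : 0 < 4 - x ^ 2 := by nlinarith
  refine ((hasDerivAt_pow (n + 1) x).mul
    (((hasDerivAt_pow 2 x).const_sub 4).sqrt hpos.ne')).congr_deriv ?_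
  have hsq := sq_sqrt hpos.le
  have hne := (sqrt_pos.2 hpos).ne'
  field_simp
  push_cast
  linear_combination 2 * (n + 1 : ℝ) * x ^ n * hsq

theorem arcsineMoment_add_two (n : ℕ) :
    (n + 2) * arcsineMoment (n + 2) = 4 * (n + 1) * arcsineMoment n := by
  have hint := intervalIntegrable_pow_div_sqrt_four_sub_sq
  have hftc := integral_eq_sub_of_hasDerivAt_of_le (by norm_num) (by fun_prop)
    (fun _ hx => hasDerivAt_pow_mul_sqrt_four_sub_sq n hx)
    (((hint n).const_mul _).sub ((hint (n + 2)).const_mul _))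
  rw [integral_sub ((hint n).const_mul _) ((hint (n + 2)).const_mul _),
    intervalIntegral.integral_const_mul, intervalIntegral.integral_const_mul] at hftc
  norm_num at hftc
  rw [arcsineMoment, arcsineMoment]
  linarith

theorem arcsineMoment_two_mul_add_one (m : ℕ) : arcsineMoment (2 * m + 1) = 0 := by
  have h := integral_comp_neg (a := -2) (b := 2) fun x : ℝ => x ^ (2 * m + 1) / √(4 - x ^ 2)
  simp only [Odd.neg_pow (odd_two_mul_add_one m), neg_div, intervalIntegral.integral_neg, neg_sq,
    neg_neg] at h
  rw [arcsineMoment]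
  linarith

theorem arcsineMoment_two_mul (m : ℕ) : arcsineMoment (2 * m) = π * m.centralBinom := by
  induction m with
  | zero => simpa using arcsineMoment_zero
  | succ m ih =>
    have hrec := arcsineMoment_add_two (2 * m)
    have hbinom := congrArg (Nat.cast : ℕ → ℝ) (Nat.succ_mul_centralBinom_succ m)
    push_cast at hrec hbinom
    rw [ih] at hrec
    rw [show 2 * (m + 1) = 2 * m + 2 by ring]
    refine mul_left_cancel₀ (show (2 * m + 2 : ℝ) ≠ 0 by positivity) ?_
    linear_combination hrec - 2 * π * hbinom

theorem centralBinom_add_three (j : ℕ) :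
    (j + 3).centralBinom = 3 * (j + 2).centralBinom + 2 * (2 * j + 3).choose j := by
  have h₁ : (2 * j + 3).choose (j + 3) = (2 * j + 3).choose j := by
    rw [Nat.choose_symm_of_eq_add]; ring
  have h₂ : (2 * j + 3).choose (j + 2) = (2 * j + 3).choose (j + 1) := by
    rw [Nat.choose_symm_of_eq_add]; ring
  rw [Nat.centralBinom, Nat.centralBinom, show 2 * (j + 3) = 2 * j + 3 + 1 + 1 + 1 by ring,
    show 2 * (j + 2) = 2 * j + 3 + 1 by ring]
  generalize 2 * j + 3 = n at h₁ h₂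
  simp only [Nat.choose_succ_succ', h₁, h₂]
  ring

theorem arcsineMoment_add_three_sub (k : ℕ) :
    arcsineMoment (k + 3) - 3 * arcsineMoment (k + 1) =
      if Odd k ∧ 3 ≤ k then 2 * π * k.choose ((k - 3) / 2) else 0 := by
  rcases Nat.even_or_odd' k with ⟨m, rfl | rfl⟩
  · rw [if_neg fun h => Nat.not_odd_iff_even.2 (even_two_mul m) h.1,
      show 2 * m + 3 = 2 * (m + 1) + 1 by ring, arcsineMoment_two_mul_add_one,
      arcsineMoment_two_mul_add_one]
    ring
  · rw [show 2 * m + 1 + 3 = 2 * (m + 2) by ring, show 2 * m + 1 + 1 = 2 * (m + 1) by ring,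
      arcsineMoment_two_mul, arcsineMoment_two_mul]
    rcases m with _ | j
    · rw [if_neg (by omega)]
      norm_num [Nat.centralBinom, Nat.choose]
      ring
    · rw [if_pos ⟨odd_two_mul_add_one _, by omega⟩, show (2 * (j + 1) + 1 - 3) / 2 = j by omega,
        show 2 * (j + 1) + 1 = 2 * j + 3 by ring, centralBinom_add_three]
      push_cast
      ring

theorem setIntegral_pow_mul_density (c : ℝ) (k : ℕ) :
    ∫ x in Icc (-2 : ℝ) 2, x ^ k * (c * (x * (x ^ 2 - 3) / √(4 - x ^ 2))) =
      c * (arcsineMoment (k + 3) - 3 * arcsineMoment (k + 1)) := by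
  have hint := intervalIntegrable_pow_div_sqrt_four_sub_sq
  have hexpand : ∀ x : ℝ, x ^ k * (c * (x * (x ^ 2 - 3) / √(4 - x ^ 2))) =
      c * (x ^ (k + 3) / √(4 - x ^ 2)) - 3 * c * (x ^ (k + 1) / √(4 - x ^ 2)) := fun x => by
    ring
  rw [integral_Icc_eq_integral_Ioc, ← integral_of_le (by norm_num), funext hexpand,
    integral_sub ((hint _).const_mul _) ((hint _).const_mul _),
    intervalIntegral.integral_const_mul, intervalIntegral.integral_const_mul, arcsineMoment,
    arcsineMoment]
  ring

theorem nuXi_moments_general (ξ : ℝ) (k : ℕ) :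
    (∫ x in Set.Icc (-2 : ℝ) 2,
        x ^ k * (ξ / (2 * Real.pi) * (x * (x ^ 2 - 3) / Real.sqrt (4 - x ^ 2)))) =
      (if Odd k ∧ 3 ≤ k then ξ * (k.choose ((k - 3) / 2)) else 0) ∧
    (∫ x in Set.Icc (-2 : ℝ) 2,
        (ξ / (2 * Real.pi) * (x * (x ^ 2 - 3) / Real.sqrt (4 - x ^ 2)))) = 0 := by
  constructor
  · rw [setIntegral_pow_mul_density, arcsineMoment_add_three_sub]
    split_ifs
    · field_simp
    · ring
  · simpa [arcsineMoment_add_three_sub] using setIntegral_pow_mul_density (ξ / (2 * π)) 0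

/-- **Moments of the signed measure `ν_ξ` (equation (9)).**
For the signed measure `ν_ξ` with Lebesgue density `(ξ/2π)·x(x²-3)/√(4-x²)` on `[-2,2]`,
`m_k(ν_ξ) = ξ·C(k,(k-3)/2)` if `k` is odd and `k ≥ 3`, and `m_k(ν_ξ) = 0` if `k` is even or
`k = 1`; moreover `ν_ξ` has total mass zero. -/
theorem nuXi_moments (ξ : ℝ) (hξ : 0 ≤ ξ) (k : ℕ) (hk : 1 ≤ k) :
    (∫ x in Set.Icc (-2 : ℝ) 2,
        x ^ k * (ξ / (2 * Real.pi) * (x * (x ^ 2 - 3) / Real.sqrt (4 - x ^ 2)))) =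
      (if Odd k ∧ 3 ≤ k then ξ * (k.choose ((k - 3) / 2)) else 0) ∧
    (∫ x in Set.Icc (-2 : ℝ) 2,
        (ξ / (2 * Real.pi) * (x * (x ^ 2 - 3) / Real.sqrt (4 - x ^ 2)))) = 0 :=
  nuXi_moments_general ξ k
end
end
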